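/- arXiv:0805.2219 — 6 statements merged into one kernel-verified Lean document; each statement's English description precedes it below -/
import Mathlib

section
/- For every Borel probability measure P on ℝ^d and every α ∈ (0, 1], the α-trimming P^α is a compact subset of the space of Borel probability measures on ℝ^d endowed with the topology of weak convergence. -/
open MeasureTheory Filter Topology

/-- The `α`-trimming of a Borel probability measure `P` on `ℝ^d`: the set of Borel probability
measures `Q` with `Q B ≤ α⁻¹ * P B` for every Borel set `B`. -/
def trimSet {d : ℕ} (P : ProbabilityMeasure (Fin d → ℝ)) (α : ℝ) :
    Set (ProbabilityMeasure (Fin d → ℝ)) :=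
  {Q | ∀ B : Set (Fin d → ℝ), MeasurableSet B →
    (Q : Measure (Fin d → ℝ)) B ≤ ENNReal.ofReal α⁻¹ * (P : Measure (Fin d → ℝ)) B}

/-!
The trimming is the set of probability measures dominated by `α⁻¹ • P`. Domination by a multiple
of the tight measure `P` passes tightness on, so by Prokhorov's theorem it suffices to show that
the set is weakly closed. By outer regularity of `P`, domination only has to be checked on open
sets, and `Q ↦ Q U` is lower semicontinuous for open `U` (portmanteau).
-/

open scoped ENNReal

namespace MeasureTheory

variable {E : Type*} [MeasurableSpace E] [TopologicalSpace E]

lemma Measure.le_of_forall_isOpen_le {μ ν : Measure E} [μ.OuterRegular]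
    (h : ∀ U, IsOpen U → ν U ≤ μ U) : ν ≤ μ :=
  Measure.le_intro fun A _ _ => by
    rw [A.measure_eq_iInf_isOpen μ]
    exact le_iInf₂ fun U hAU => le_iInf fun hU => (measure_mono hAU).trans (h U hU)

lemma IsTightMeasureSet.of_forall_le_smul {μ : Measure E} (hμ : IsTightMeasureSet {μ})
    {c : ℝ≥0∞} (hc : c ≠ ∞) {S : Set (Measure E)} (hS : ∀ ν ∈ S, ν ≤ c • μ) :
    IsTightMeasureSet S := by
  rw [isTightMeasureSet_iff_exists_isCompact_measure_compl_le] at hμ ⊢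
  intro ε hε
  obtain ⟨K, hK, hμK⟩ := hμ (ε / c) (ENNReal.div_pos hε.ne' hc)
  refine ⟨K, hK, fun ν hν => ?_⟩
  calc ν Kᶜ ≤ c * μ Kᶜ := hS ν hν Kᶜ
    _ ≤ c * (ε / c) := by gcongr; exact hμK μ rfl
    _ ≤ ε := ENNReal.mul_div_le

lemma ProbabilityMeasure.isClosed_setOf_le_smul [OpensMeasurableSpace E] [HasOuterApproxClosed E]
    (μ : Measure E) [μ.OuterRegular] {c : ℝ≥0∞} (hc : c ≠ ∞) :
    IsClosed {ν : ProbabilityMeasure E | (ν : Measure E) ≤ c • μ} := by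
  set S := {ν : ProbabilityMeasure E | (ν : Measure E) ≤ c • μ}
  refine isClosed_of_closure_subset fun ν hν => ?_
  have := mem_closure_iff_nhdsWithin_neBot.1 hν
  have := Measure.OuterRegular.smul μ hc
  refine Measure.le_of_forall_isOpen_le fun U hU => ?_
  calc (ν : Measure E) U
      ≤ liminf (fun ν' : ProbabilityMeasure E => (ν' : Measure E) U) (𝓝[S] ν) :=
        ProbabilityMeasure.le_liminf_measure_open_of_tendsto
          (μs := id) (tendsto_id.mono_left nhdsWithin_le_nhds) hU
    _ ≤ (c • μ) U := liminf_le_of_frequently_le'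
        (eventually_mem_nhdsWithin.mono fun _ (h : _ ∈ S) => h U).frequently

lemma ProbabilityMeasure.isCompact_setOf_le_smul [T2Space E] [BorelSpace E]
    [HasOuterApproxClosed E] (μ : Measure E) [μ.OuterRegular] (hμ : IsTightMeasureSet {μ})
    {c : ℝ≥0∞} (hc : c ≠ ∞) :
    IsCompact {ν : ProbabilityMeasure E | (ν : Measure E) ≤ c • μ} := by
  rw [← (isClosed_setOf_le_smul μ hc).closure_eq]
  exact isCompact_closure_of_isTightMeasureSet
    (hμ.of_forall_le_smul hc (by rintro _ ⟨ν, hν, rfl⟩; exact hν))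

end MeasureTheory

lemma trimSet_eq_setOf_le_smul {d : ℕ} (P : ProbabilityMeasure (Fin d → ℝ)) (α : ℝ) :
    trimSet P α = {Q : ProbabilityMeasure (Fin d → ℝ) |
      (Q : Measure (Fin d → ℝ)) ≤ ENNReal.ofReal α⁻¹ • (P : Measure (Fin d → ℝ))} := by
  ext Q
  simp only [trimSet, Set.mem_ofPred_eq, Measure.le_iff, Measure.smul_apply, smul_eq_mul]

theorem isCompact_trimSet_general {d : ℕ} (P : ProbabilityMeasure (Fin d → ℝ))
    (α : ℝ) :
    IsCompact (trimSet P α) := by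
  rw [trimSet_eq_setOf_le_smul]
  exact ProbabilityMeasure.isCompact_setOf_le_smul _ isTightMeasureSet_singleton
    ENNReal.ofReal_ne_top

/-- For every Borel probability measure `P` on `ℝ^d` and every `α ∈ (0,1]`, the `α`-trimming
`P^α` is compact in the space of Borel probability measures on `ℝ^d` endowed with the topology
of weak convergence. -/
theorem isCompact_trimSet {d : ℕ} (P : ProbabilityMeasure (Fin d → ℝ))
    (α : ℝ) (hα : α ∈ Set.Ioc (0 : ℝ) 1) :
    IsCompact (trimSet P α) :=
  isCompact_trimSet_general P α
end

section
/- Let {X_i}_{i≥1} be a sequence of independent, identically distributed random vectors in ℝ^d with common distribution P, let P_n denote the empirical probability measure of X_1, …, X_n, let α ∈ (0, 1] and let Q ∈ P^α. Then almost surely there exists a strictly increasing sequence of indices {n_k}_k and probability measures Q_{n_k} ∈ P_{n_k}^α for all k such that Q_{n_k} converges weakly to Q as k → ∞. -/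
/-!
Since `Q ≤ α⁻¹ P`, `Q` has a density `f ≤ α⁻¹` with respect to `P`. Reweighting the empirical
measure `Pₙ` by `f + sₙ` and normalising gives a measure that is `α`-trimmed from `Pₙ` as soon as
the constant `sₙ ≥ 0` compensates for `∫ f dPₙ` falling short of `1`; by the strong law of large
numbers `∫ f dPₙ → 1`, so `sₙ → 0`, and `∫ g` against the reweighted measure tends to
`∫ f g dP = ∫ g dQ`. Weak convergence follows because, the weak topology being first countable,
convergence to `Q` is tested by countably many bounded continuous `g`, to which the strong law
applies simultaneously almost surely. For `α = 1` no reweighting is possible, but then `Q = P`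
and `Pₙ` itself works.
-/

open MeasureTheory ProbabilityTheory Filter Topology BoundedContinuousFunction
open scoped NNReal ENNReal

theorem MeasureTheory.ProbabilityMeasure.exists_countable_tendsto_of_forall_integral_tendsto
    {X : Type*} [TopologicalSpace X] [MeasurableSpace X] [OpensMeasurableSpace X]
    [FirstCountableTopology (ProbabilityMeasure X)] (μ : ProbabilityMeasure X) :
    ∃ G : Set (X →ᵇ ℝ), G.Countable ∧ ∀ μs : ℕ → ProbabilityMeasure X,
      (∀ g ∈ G, Tendsto (fun n ↦ ∫ x, g x ∂(μs n : Measure X)) atTop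
        (𝓝 (∫ x, g x ∂(μ : Measure X)))) → Tendsto μs atTop (𝓝 μ) := by
  set φ : (X →ᵇ ℝ) → ProbabilityMeasure X → ℝ := fun g ν ↦ ∫ x, g x ∂(ν : Measure X)
  have hle : ⨅ g, comap (φ g) (𝓝 (φ g μ)) ≤ 𝓝 μ :=
    ProbabilityMeasure.tendsto_iff_forall_integral_tendsto.2 fun g ↦
      tendsto_iInf' g tendsto_comap
  obtain ⟨U, hU⟩ := (𝓝 μ).exists_antitone_basis
  choose t ht using fun k ↦ (mem_iInf_finite (U k)).1 (hle (hU.mem k))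
  refine ⟨⋃ k, (t k : Set (X →ᵇ ℝ)),
    Set.countable_iUnion fun k ↦ Finset.countable_toSet _, fun μs hμs ↦ ?_⟩
  refine hU.1.tendsto_right_iff.2 fun k _ ↦ ?_
  have : Tendsto μs atTop (⨅ g ∈ t k, comap (φ g) (𝓝 (φ g μ))) := by
    simp only [tendsto_iInf, tendsto_comap_iff]
    exact fun g hg ↦ hμs _ (Set.mem_iUnion.2 ⟨k, hg⟩)
  exact this (ht k)

theorem integrable_coe_nnreal_of_le {E : Type*} [MeasurableSpace E] {ν : Measure E}
    [IsFiniteMeasure ν] {f : E → ℝ≥0} (hf : Measurable f) {c : ℝ} (hfc : ∀ x, (f x : ℝ) ≤ c) :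
    Integrable (fun x ↦ (f x : ℝ)) ν :=
  Integrable.of_bound hf.coe_nnreal_real.aestronglyMeasurable c
    (ae_of_all _ fun x ↦ by simpa using hfc x)

theorem MeasureTheory.Measure.exists_withDensity_eq_of_le_smul {E : Type*} [MeasurableSpace E]
    {P Q : Measure E} [SigmaFinite P] [SigmaFinite Q] {c : ℝ≥0} (h : Q ≤ (c : ℝ≥0∞) • P) :
    ∃ f : E → ℝ≥0, Measurable f ∧ (∀ x, f x ≤ c) ∧ Q = P.withDensity fun x ↦ f x := by
  have hQP : Q ≪ P := (Measure.absolutelyContinuous_of_le h).trans Measure.smul_absolutelyContinuous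
  have hle : Q.rnDeriv P ≤ᵐ[P] fun _ ↦ c :=
    ae_le_of_forall_setLIntegral_le_of_sigmaFinite (Q.measurable_rnDeriv P) fun s _ _ ↦ by
      simpa [setLIntegral_const] using (Measure.setLIntegral_rnDeriv_le s).trans (h s)
  refine ⟨fun x ↦ min (Q.rnDeriv P x).toNNReal c,
    (Q.measurable_rnDeriv P).ennreal_toNNReal.min measurable_const, fun x ↦ min_le_right _ _, ?_⟩
  conv_lhs => rw [← Measure.withDensity_rnDeriv_eq Q P hQP]
  refine withDensity_congr_ae ?_
  filter_upwards [hle] with x hx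
  rw [ENNReal.coe_min, ENNReal.coe_toNNReal (ne_top_of_le_ne_top ENNReal.coe_ne_top hx),
    min_eq_left hx]

section Empirical

variable {E : Type*} [MeasurableSpace E]

noncomputable def empiricalMeasure (x : ℕ → E) (n : ℕ) : Measure E :=
  (n : ℝ≥0∞)⁻¹ • ∑ i ∈ Finset.range n, Measure.dirac (x i)

theorem isProbabilityMeasure_empiricalMeasure (x : ℕ → E) {n : ℕ} (hn : n ≠ 0) :
    IsProbabilityMeasure (empiricalMeasure x n) := by
  constructor
  simp [empiricalMeasure, ENNReal.inv_mul_cancel (Nat.cast_ne_zero.2 hn) (ENNReal.natCast_ne_top n)]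

variable [MeasurableSingletonClass E]

theorem integral_empiricalMeasure (x : ℕ → E) (n : ℕ) (g : E → ℝ) :
    ∫ y, g y ∂empiricalMeasure x n = (∑ i ∈ Finset.range n, g (x i)) / n := by
  rw [empiricalMeasure, integral_smul_measure,
    integral_finsetSum_measure fun i _ ↦ integrable_dirac ENNReal.coe_lt_top]
  simp [integral_dirac, div_eq_inv_mul]

theorem eq_empiricalMeasure_of_forall_measureReal (ρ : Measure E) [IsFiniteMeasure ρ]
    (x : ℕ → E) {n : ℕ} (hn : n ≠ 0)
    (h : ∀ B, MeasurableSet B →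
      ρ.real B = (∑ i ∈ Finset.range n, B.indicator (fun _ ↦ (1 : ℝ)) (x i)) / n) :
    ρ = empiricalMeasure x n := by
  have := isProbabilityMeasure_empiricalMeasure x hn
  ext B hB
  rw [← ENNReal.ofReal_toReal (measure_ne_top ρ B),
    ← ENNReal.ofReal_toReal (measure_ne_top (empiricalMeasure x n) B)]
  congr 1
  exact (h B hB).trans ((integral_empiricalMeasure x n _).symm.trans (integral_indicator_one hB))

theorem ae_tendsto_integral_empiricalMeasure {Ω : Type*} [MeasurableSpace Ω] {μ : Measure Ω}
    {P : Measure E} {X : ℕ → Ω → E} (hmeas : ∀ i, Measurable (X i)) (hindep : iIndepFun X μ)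
    (hdist : ∀ i, μ.map (X i) = P) {g : E → ℝ} (hg : Measurable g) (hgP : Integrable g P) :
    ∀ᵐ ω ∂μ, Tendsto (fun n ↦ ∫ y, g y ∂empiricalMeasure (X · ω) n) atTop
      (𝓝 (∫ y, g y ∂P)) := by
  have hident : ∀ i, IdentDistrib (X i) (X 0) μ μ := fun i ↦
    ⟨(hmeas i).aemeasurable, (hmeas 0).aemeasurable, by rw [hdist i, hdist 0]⟩
  have hint : Integrable (g ∘ X 0) μ := by
    rw [← integrable_map_measure (hdist 0 ▸ hg.aestronglyMeasurable) (hmeas 0).aemeasurable,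
      hdist 0]
    exact hgP
  have hmean : ∫ ω, (g ∘ X 0) ω ∂μ = ∫ y, g y ∂P := by
    rw [← hdist 0, integral_map (hmeas 0).aemeasurable (hdist 0 ▸ hg.aestronglyMeasurable)]
    rfl
  filter_upwards [strong_law_ae (fun i ↦ g ∘ X i) hint
    (fun i j hij ↦ (hindep.indepFun hij).comp hg hg) fun i ↦ (hident i).comp hg] with ω hω
  rw [← hmean]
  simpa [integral_empiricalMeasure, div_eq_inv_mul] using hω

end Empirical

section Trimming

variable {d : ℕ} {P Q : ProbabilityMeasure (Fin d → ℝ)} {α : ℝ}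

theorem mem_trimSet_iff :
    Q ∈ trimSet P α ↔ (Q : Measure (Fin d → ℝ)) ≤ ENNReal.ofReal α⁻¹ • (P : Measure _) := by
  rw [Measure.le_iff]
  rfl

theorem self_mem_trimSet (hα0 : 0 < α) (hα1 : α ≤ 1) : P ∈ trimSet P α :=
  fun _ _ ↦ le_mul_of_one_le_left zero_le <| ENNReal.one_le_ofReal.2 <| (one_le_inv₀ hα0).2 hα1

theorem eq_of_mem_trimSet_one (hQ : Q ∈ trimSet P 1) : Q = P := by
  rw [mem_trimSet_iff, inv_one, ENNReal.ofReal_one, one_smul] at hQ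
  exact ProbabilityMeasure.toMeasure_injective
    (Measure.eq_of_le_of_measure_univ_eq hQ (measure_univ.trans measure_univ.symm))

theorem exists_density_of_mem_trimSet (hα : 0 ≤ α) (hQ : Q ∈ trimSet P α) :
    ∃ f : (Fin d → ℝ) → ℝ≥0, Measurable f ∧ (∀ x, (f x : ℝ) ≤ α⁻¹) ∧
      ∀ g : (Fin d → ℝ) → ℝ, ∫ x, g x ∂(Q : Measure _) = ∫ x, f x * g x ∂(P : Measure _) := by
  obtain ⟨f, hf, hfle, hQf⟩ := Measure.exists_withDensity_eq_of_le_smul (mem_trimSet_iff.1 hQ)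
  refine ⟨f, hf, fun x ↦ ?_, fun g ↦ ?_⟩
  · exact (NNReal.coe_le_coe.2 (hfle x)).trans (Real.coe_toNNReal _ (inv_nonneg.2 hα)).le
  · rw [hQf, integral_withDensity_eq_integral_smul hf]
    rfl

end Trimming

theorem exists_mem_trimSet_integral_eq_div {d : ℕ} (ν : ProbabilityMeasure (Fin d → ℝ))
    {α : ℝ} {h : (Fin d → ℝ) → ℝ≥0} (hh : Measurable h) {c : ℝ≥0} (hc : ∀ x, h x ≤ c)
    (hpos : 0 < ∫ x, (h x : ℝ) ∂(ν : Measure _))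
    (hcα : c ≤ α⁻¹ * ∫ x, (h x : ℝ) ∂(ν : Measure _)) :
    ∃ Q ∈ trimSet ν α, ∀ g : (Fin d → ℝ) → ℝ, ∫ x, g x ∂(Q : Measure _) =
      (∫ x, h x * g x ∂(ν : Measure _)) / ∫ x, (h x : ℝ) ∂(ν : Measure _) := by
  set m := ∫ x, (h x : ℝ) ∂(ν : Measure _)
  have hlint : ∫⁻ x, h x ∂(ν : Measure _) = ENNReal.ofReal m :=
    lintegral_coe_eq_integral h <| integrable_coe_nnreal_of_le hh fun x ↦ NNReal.coe_le_coe.2 (hc x)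
  set R := (ENNReal.ofReal m)⁻¹ • (ν : Measure _).withDensity fun x ↦ (h x : ℝ≥0∞)
  have hR : IsProbabilityMeasure R := ⟨by
    rw [Measure.smul_apply, withDensity_apply _ MeasurableSet.univ, Measure.restrict_univ, hlint,
      smul_eq_mul, ENNReal.inv_mul_cancel (ENNReal.ofReal_pos.2 hpos).ne' ENNReal.ofReal_ne_top]⟩
  refine ⟨⟨R, hR⟩, mem_trimSet_iff.2 <| Measure.le_iff.2 fun B hB ↦ ?_, fun g ↦ ?_⟩
  · have hmass : (ENNReal.ofReal m)⁻¹ * c ≤ ENNReal.ofReal α⁻¹ := by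
      rw [ENNReal.inv_mul_le_iff (ENNReal.ofReal_pos.2 hpos).ne' ENNReal.ofReal_ne_top,
        ← ENNReal.ofReal_mul hpos.le, ← ENNReal.ofReal_coe_nnreal]
      exact ENNReal.ofReal_le_ofReal (by linarith)
    calc R B = (ENNReal.ofReal m)⁻¹ * ∫⁻ x in B, h x ∂(ν : Measure _) := by
          rw [Measure.smul_apply, withDensity_apply _ hB, smul_eq_mul]
      _ ≤ (ENNReal.ofReal m)⁻¹ * (c * (ν : Measure _) B) := by
          gcongr
          simpa [setLIntegral_const] using
            setLIntegral_mono measurable_const fun x _ ↦ ENNReal.coe_le_coe.2 (hc x)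
      _ ≤ ENNReal.ofReal α⁻¹ * (ν : Measure _) B := by
          rw [← mul_assoc]
          gcongr
  · change ∫ x, g x ∂(R : Measure _) = _
    rw [integral_smul_measure, integral_withDensity_eq_integral_smul hh, ENNReal.toReal_inv,
      ENNReal.toReal_ofReal hpos.le, smul_eq_mul, div_eq_inv_mul]
    rfl

theorem exists_mem_trimSet_tendsto_of_tendsto_integral_density {d : ℕ} {α : ℝ} (hα0 : 0 < α)
    (hα1 : α < 1) (ν : ℕ → ProbabilityMeasure (Fin d → ℝ)) {f : (Fin d → ℝ) → ℝ≥0}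
    (hf : Measurable f) (hfα : ∀ x, (f x : ℝ) ≤ α⁻¹)
    (hfν : Tendsto (fun n ↦ ∫ x, (f x : ℝ) ∂(ν n : Measure _)) atTop (𝓝 1)) :
    ∃ Q : ℕ → ProbabilityMeasure (Fin d → ℝ), (∀ n, Q n ∈ trimSet (ν n) α) ∧
      ∀ (g : (Fin d → ℝ) →ᵇ ℝ) (l : ℝ),
        Tendsto (fun n ↦ ∫ x, f x * g x ∂(ν n : Measure _)) atTop (𝓝 l) →
        Tendsto (fun n ↦ ∫ x, g x ∂(Q n : Measure _)) atTop (𝓝 l) := by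
  set a := fun n ↦ ∫ x, (f x : ℝ) ∂(ν n : Measure _)
  -- `s n` is the least constant such that `ν n` reweighted by `f + s n` is `α`-trimmed:
  -- the criterion `α⁻¹ + s ≤ α⁻¹ * ∫ (f + s) dν` reads `1 - a n ≤ s n * (1 - α)`.
  set s : ℕ → ℝ≥0 := fun n ↦ (max 0 (1 - a n) / (1 - α)).toNNReal
  have hs_eq : ∀ n, (s n : ℝ) = max 0 (1 - a n) / (1 - α) := fun n ↦
    Real.coe_toNNReal _ (div_nonneg (le_max_left _ _) (by linarith))
  have hs : ∀ n, (s n : ℝ) * (1 - α) = max 0 (1 - a n) := fun n ↦ by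
    rw [hs_eq, div_mul_cancel₀ _ (by linarith)]
  have hs_lim : Tendsto (fun n ↦ (s n : ℝ)) atTop (𝓝 0) := by
    simp_rw [hs_eq]
    simpa using ((tendsto_const_nhds (x := (0 : ℝ))).max
      ((tendsto_const_nhds (x := (1 : ℝ))).sub hfν)).div_const (1 - α)
  have hfint : ∀ n, Integrable (fun x ↦ (f x : ℝ)) (ν n : Measure _) := fun n ↦
    integrable_coe_nnreal_of_le hf hfα
  have hmass : ∀ n, ∫ x, ((f x + s n : ℝ≥0) : ℝ) ∂(ν n : Measure _) = a n + s n := fun n ↦ by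
    simp [integral_add (hfint n) (integrable_const _), a]
  have ha0 : ∀ n, 0 ≤ a n := fun n ↦ integral_nonneg fun x ↦ (f x).2
  have hmass_pos : ∀ n, 0 < a n + s n := fun n ↦ by
    nlinarith [hs n, le_max_right 0 (1 - a n), (s n).2, ha0 n]
  have hcα : ∀ n, ((α⁻¹.toNNReal + s n : ℝ≥0) : ℝ) ≤ α⁻¹ * (a n + s n) := fun n ↦ by
    have h1 : α⁻¹ * (1 - a n) ≤ α⁻¹ * (s n * (1 - α)) :=
      mul_le_mul_of_nonneg_left (hs n ▸ le_max_right _ _) (inv_nonneg.2 hα0.le)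
    rw [NNReal.coe_add, Real.coe_toNNReal _ (inv_nonneg.2 hα0.le)]
    nlinarith [mul_inv_cancel₀ hα0.ne']
  choose Q hQ hQint using fun n ↦ exists_mem_trimSet_integral_eq_div (ν n)
    (h := fun x ↦ f x + s n) (hf.add measurable_const) (c := α⁻¹.toNNReal + s n)
    (fun x ↦ add_le_add ((Real.le_toNNReal_iff_coe_le (inv_nonneg.2 hα0.le)).2 (hfα x)) le_rfl)
    ((hmass n).symm ▸ hmass_pos n) ((hmass n).symm ▸ hcα n)
  refine ⟨Q, hQ, fun g l hl ↦ ?_⟩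
  have hsplit : ∀ n, ∫ x, g x ∂(Q n : Measure _)
      = (∫ x, f x * g x ∂(ν n : Measure _) + s n * ∫ x, g x ∂(ν n : Measure _)) / (a n + s n) := by
    intro n
    rw [hQint, hmass, ← integral_const_mul, ← integral_add]
    · simp only [NNReal.coe_add, add_mul]
    · exact (hfint n).mul_bdd g.continuous.aestronglyMeasurable (ae_of_all _ g.norm_coe_le_norm)
    · exact (g.integrable _).const_mul _
  have hbdd : IsBoundedUnder (· ≤ ·) atTop fun n ↦ ‖∫ x, g x ∂(ν n : Measure _)‖ :=
    isBoundedUnder_of ⟨‖g‖, fun n ↦ norm_integral_le_norm _ g⟩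
  simp_rw [hsplit]
  have := (hl.add (hs_lim.zero_mul_isBoundedUnder_le hbdd)).div (hfν.add hs_lim) (by norm_num)
  rwa [add_zero, add_zero, div_one] at this

theorem mem_limsup_trimmed_empirical_general {d : ℕ} {Ω : Type*} [MeasurableSpace Ω]
    (μ : Measure Ω)
    (P : ProbabilityMeasure (Fin d → ℝ))
    (X : ℕ → Ω → (Fin d → ℝ))
    (hmeas : ∀ i, Measurable (X i))
    (hindep : iIndepFun X μ)
    (hdist : ∀ i, μ.map (X i) = (P : Measure (Fin d → ℝ)))
    (Pn : Ω → ℕ → ProbabilityMeasure (Fin d → ℝ))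
    (hPn : ∀ ω : Ω, ∀ n : ℕ, 1 ≤ n → ∀ B : Set (Fin d → ℝ), MeasurableSet B →
      ((Pn ω n : Measure (Fin d → ℝ)) B).toReal
        = (∑ i ∈ Finset.range n, Set.indicator B (fun _ => (1 : ℝ)) (X i ω)) / n)
    (α : ℝ) (hα : α ∈ Set.Ioc (0 : ℝ) 1)
    (Q : ProbabilityMeasure (Fin d → ℝ)) (hQ : Q ∈ trimSet P α) :
    ∀ᵐ ω ∂μ, ∃ (ns : ℕ → ℕ) (Qk : ℕ → ProbabilityMeasure (Fin d → ℝ)),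
      StrictMono ns ∧ 1 ≤ ns 0 ∧
      (∀ k, Qk k ∈ trimSet (Pn ω (ns k)) α) ∧
      Tendsto Qk atTop (nhds Q) := by
  obtain ⟨G, hGc, hG⟩ := ProbabilityMeasure.exists_countable_tendsto_of_forall_integral_tendsto Q
  have hPn_emp : ∀ ω n, (Pn ω (n + 1) : Measure _) = empiricalMeasure (X · ω) (n + 1) :=
    fun ω n ↦ eq_empiricalMeasure_of_forall_measureReal _ _ n.succ_ne_zero
      (hPn ω (n + 1) (Nat.le_add_left 1 n))
  have hslln : ∀ g : (Fin d → ℝ) → ℝ, Measurable g → Integrable g P → ∀ᵐ ω ∂μ,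
      Tendsto (fun n ↦ ∫ x, g x ∂(Pn ω (n + 1) : Measure _)) atTop
        (𝓝 (∫ x, g x ∂(P : Measure _))) := by
    intro g hg hgP
    filter_upwards [ae_tendsto_integral_empiricalMeasure hmeas hindep hdist hg hgP] with ω hω
    simpa only [hPn_emp] using (tendsto_add_atTop_iff_nat 1).2 hω
  have hshift : StrictMono (· + 1 : ℕ → ℕ) := strictMono_id.add_const 1
  rcases hα.2.eq_or_lt with rfl | hα1
  · obtain rfl := eq_of_mem_trimSet_one hQ
    filter_upwards [(ae_ball_iff hGc).2 fun g _ ↦ hslln g g.continuous.measurable (g.integrable _)]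
      with ω hω
    exact ⟨(· + 1), fun n ↦ Pn ω (n + 1), hshift, le_rfl, fun n ↦ self_mem_trimSet one_pos le_rfl,
      hG _ hω⟩
  · obtain ⟨f, hf, hfα, hQf⟩ := exists_density_of_mem_trimSet hα.1.le hQ
    have hfP : ∫ x, (f x : ℝ) ∂(P : Measure _) = 1 := by simpa using (hQf 1).symm
    have hfP_int : Integrable (fun x ↦ (f x : ℝ)) P := integrable_coe_nnreal_of_le hf hfα
    filter_upwards [hslln _ hf.coe_nnreal_real hfP_int, (ae_ball_iff hGc).2 fun g _ ↦
      hslln (fun x ↦ f x * g x) (hf.coe_nnreal_real.mul g.continuous.measurable)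
        (hfP_int.mul_bdd g.continuous.aestronglyMeasurable (ae_of_all _ g.norm_coe_le_norm))]
      with ω hf1 hfg
    obtain ⟨Qk, htrim, hconv⟩ := exists_mem_trimSet_tendsto_of_tendsto_integral_density hα.1 hα1
      (fun n ↦ Pn ω (n + 1)) hf hfα (hfP ▸ hf1)
    exact ⟨(· + 1), Qk, hshift, le_rfl, htrim, hG Qk fun g hg ↦ hconv g _ ((hQf g).symm ▸ hfg g hg)⟩

/-- Let `X₁, X₂, …` be i.i.d. random vectors in `ℝ^d` with common distribution `P`, let `Pₙ`
be the empirical measure of `X₁, …, Xₙ`, let `α ∈ (0,1]` and let `Q ∈ P^α`. Then almost surely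
there are a strictly increasing sequence of indices `{n_k}` and probability measures
`Q_{n_k} ∈ P_{n_k}^α` with `Q_{n_k} → Q` weakly. Here `X i` denotes `X_{i+1}` and the
empirical measures are described by the hypothesis `hPn`. -/
theorem mem_limsup_trimmed_empirical {d : ℕ} {Ω : Type*} [MeasurableSpace Ω]
    (μ : Measure Ω) [IsProbabilityMeasure μ]
    (P : ProbabilityMeasure (Fin d → ℝ))
    (X : ℕ → Ω → (Fin d → ℝ))
    (hmeas : ∀ i, Measurable (X i))
    (hindep : iIndepFun X μ)
    (hdist : ∀ i, μ.map (X i) = (P : Measure (Fin d → ℝ)))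
    (Pn : Ω → ℕ → ProbabilityMeasure (Fin d → ℝ))
    (hPn : ∀ ω : Ω, ∀ n : ℕ, 1 ≤ n → ∀ B : Set (Fin d → ℝ), MeasurableSet B →
      ((Pn ω n : Measure (Fin d → ℝ)) B).toReal
        = (∑ i ∈ Finset.range n, Set.indicator B (fun _ => (1 : ℝ)) (X i ω)) / n)
    (α : ℝ) (hα : α ∈ Set.Ioc (0 : ℝ) 1)
    (Q : ProbabilityMeasure (Fin d → ℝ)) (hQ : Q ∈ trimSet P α) :
    ∀ᵐ ω ∂μ, ∃ (ns : ℕ → ℕ) (Qk : ℕ → ProbabilityMeasure (Fin d → ℝ)),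
      StrictMono ns ∧ 1 ≤ ns 0 ∧
      (∀ k, Qk k ∈ trimSet (Pn ω (ns k)) α) ∧
      Tendsto Qk atTop (nhds Q) :=
  mem_limsup_trimmed_empirical_general μ P X hmeas hindep hdist Pn hPn α hα Q hQ
end

section
/- Let {X_i}_{i≥1} be a sequence of independent, identically distributed random vectors in ℝ^d with common distribution P, let P_n denote the empirical probability measure of X_1, …, X_n, and let α ∈ (0, 1]. Then almost surely limsup_n P_n^α ⊆ P^α, i.e., almost surely every weak limit Q of a sequence {Q_{n_k}}_k with Q_{n_k} ∈ P_{n_k}^α for all k satisfies Q ∈ P^α. -/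
/-!
By the strong law of large numbers, almost surely `Pₙ G → P G` simultaneously for the countably
many finite unions `G` of sets of a countable basis of `ℝ^d`. If `Q_{n_k} ∈ P_{n_k}^α` converges
weakly to `Q`, the portmanteau theorem gives, for each such open `G`,
`Q G ≤ liminf Q_{n_k} G ≤ α⁻¹ liminf P_{n_k} G = α⁻¹ P G`. Every open set is a directed countable
union of such `G`, so the bound passes to open sets by continuity from below, and then to all
Borel sets by outer regularity of `P`.
-/

open MeasureTheory ProbabilityTheory Filter Topology

open TopologicalSpace

theorem ae_tendsto_frequency {Ω E : Type*} [MeasurableSpace Ω] [MeasurableSpace E]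
    {μ : Measure Ω} [IsFiniteMeasure μ] {P : Measure E} {X : ℕ → Ω → E}
    (hmeas : ∀ i, Measurable (X i)) (hindep : Pairwise fun i j => X i ⟂ᵢ[μ] X j)
    (hdist : ∀ i, μ.map (X i) = P) {B : Set E} (hB : MeasurableSet B) :
    ∀ᵐ ω ∂μ, Tendsto
      (fun n : ℕ => (∑ i ∈ Finset.range n, B.indicator (fun _ => (1 : ℝ)) (X i ω)) / n)
      atTop (𝓝 (P B).toReal) := by
  set f : E → ℝ := B.indicator fun _ => 1
  have hf : Measurable f := measurable_const.indicator hB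
  have hint : Integrable (f ∘ X 0) μ :=
    (integrable_const (1 : ℝ)).indicator (hmeas 0 hB)
  have hmean : ∫ ω, f (X 0 ω) ∂μ = (P B).toReal := by
    rw [← integral_map (hmeas 0).aemeasurable hf.aestronglyMeasurable, hdist 0,
      integral_indicator_const _ hB, smul_eq_mul, mul_one, measureReal_def]
  have hident : ∀ i, IdentDistrib (f ∘ X i) (f ∘ X 0) μ μ := fun i =>
    IdentDistrib.comp ⟨(hmeas i).aemeasurable, (hmeas 0).aemeasurable, by rw [hdist, hdist]⟩ hf
  simpa only [Function.comp_apply, hmean] using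
    strong_law_ae_real (fun i => f ∘ X i) hint (fun i j hij => (hindep hij).comp hf hf) hident

theorem ae_tendsto_measure_of_frequency {Ω E : Type*} [MeasurableSpace Ω] [MeasurableSpace E]
    {μ : Measure Ω} [IsFiniteMeasure μ] {P : Measure E} [IsFiniteMeasure P] {X : ℕ → Ω → E}
    (hmeas : ∀ i, Measurable (X i)) (hindep : Pairwise fun i j => X i ⟂ᵢ[μ] X j)
    (hdist : ∀ i, μ.map (X i) = P) {B : Set E} (hB : MeasurableSet B)
    (Pn : Ω → ℕ → ProbabilityMeasure E)
    (hPn : ∀ ω n, 1 ≤ n → ((Pn ω n : Measure E) B).toReal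
        = (∑ i ∈ Finset.range n, B.indicator (fun _ => (1 : ℝ)) (X i ω)) / n) :
    ∀ᵐ ω ∂μ, Tendsto (fun n => (Pn ω n : Measure E) B) atTop (𝓝 (P B)) := by
  filter_upwards [ae_tendsto_frequency hmeas hindep hdist hB] with ω hω
  refine (ENNReal.tendsto_toReal_iff (fun n => measure_ne_top _ _) (measure_ne_top _ _)).1 ?_
  refine hω.congr' ?_
  filter_upwards [eventually_ge_atTop 1] with n hn
  exact (hPn ω n hn).symm

theorem ProbabilityMeasure.measure_le_of_tendsto_of_isOpen {Ω ι : Type*} [MeasurableSpace Ω]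
    [TopologicalSpace Ω] [OpensMeasurableSpace Ω] [HasOuterApproxClosed Ω] {L : Filter ι}
    [L.NeBot] {Q : ProbabilityMeasure Ω} {Qs : ι → ProbabilityMeasure Ω}
    (hQ : Tendsto Qs L (𝓝 Q)) {G : Set Ω} (hG : IsOpen G) {m : ι → ENNReal} {a : ENNReal}
    (hle : ∀ᶠ i in L, (Qs i : Measure Ω) G ≤ m i) (hm : Tendsto m L (𝓝 a)) :
    (Q : Measure Ω) G ≤ a :=
  (ProbabilityMeasure.le_liminf_measure_open_of_tendsto hQ hG).trans
    ((liminf_le_liminf hle).trans_eq hm.liminf_eq)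

namespace MeasureTheory.Measure

variable {E : Type*} [TopologicalSpace E] [MeasurableSpace E] {μ ν : Measure E}

theorem le_of_forall_isOpen_le_s9 [μ.OuterRegular] (h : ∀ U, IsOpen U → ν U ≤ μ U) : ν ≤ μ :=
  Measure.le_iff'.2 fun s => by
    rw [s.measure_eq_iInf_isOpen μ]
    exact le_iInf₂ fun U hsU => le_iInf fun hU => (measure_mono hsU).trans (h U hU)

theorem le_of_forall_biUnion_basis_le [μ.OuterRegular] {𝓑 : Set (Set E)}
    (h𝓑 : IsTopologicalBasis 𝓑) (h𝓑c : 𝓑.Countable)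
    (h : ∀ s : Finset 𝓑, ν (⋃ b ∈ s, (b : Set E)) ≤ μ (⋃ b ∈ s, (b : Set E))) : ν ≤ μ := by
  have := h𝓑c.to_subtype
  set G : Finset 𝓑 → Set E := fun s => ⋃ b ∈ s, (b : Set E)
  refine le_of_forall_isOpen_le_s9 fun U hU => ?_
  set T : Set (Finset 𝓑) := {s | G s ⊆ U}
  have hUT : U = ⋃ s ∈ T, G s := by
    refine subset_antisymm (fun x hx => ?_) (Set.iUnion₂_subset fun s hs => hs)
    obtain ⟨b, hb, hxb, hbU⟩ := h𝓑.exists_subset_of_mem_open hx hU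
    refine Set.mem_biUnion (x := {⟨b, hb⟩}) ?_ ?_ <;>
      simp only [T, G, Set.mem_ofPred_eq, Finset.set_biUnion_singleton]
    exacts [hbU, hxb]
  have hT : DirectedOn (fun s t => G s ⊆ G t) T := fun s hs t ht =>
    ⟨s ∪ t, by simpa only [T, G, Set.mem_ofPred_eq, Finset.set_biUnion_union] using
      Set.union_subset hs ht,
      Set.biUnion_subset_biUnion_left fun _ => Finset.mem_union_left t,
      Set.biUnion_subset_biUnion_left fun _ => Finset.mem_union_right s⟩
  rw [hUT, measure_biUnion_eq_iSup T.to_countable hT, measure_biUnion_eq_iSup T.to_countable hT]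
  exact iSup₂_mono fun s _ => h s

end MeasureTheory.Measure

/-- `X i` is the paper's `X_{i+1}`, and `Pn ω n` is the empirical measure of the first `n`
samples (for `n ≥ 1`). -/
theorem limsup_subset_trimSet_general {d : ℕ} {Ω : Type*} [MeasurableSpace Ω]
    (μ : Measure Ω) [IsProbabilityMeasure μ]
    (P : ProbabilityMeasure (Fin d → ℝ))
    (X : ℕ → Ω → (Fin d → ℝ))
    (hmeas : ∀ i, Measurable (X i))
    (hindep : iIndepFun X μ)
    (hdist : ∀ i, μ.map (X i) = (P : Measure (Fin d → ℝ)))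
    (Pn : Ω → ℕ → ProbabilityMeasure (Fin d → ℝ))
    (hPn : ∀ ω : Ω, ∀ n : ℕ, 1 ≤ n → ∀ B : Set (Fin d → ℝ), MeasurableSet B →
      ((Pn ω n : Measure (Fin d → ℝ)) B).toReal
        = (∑ i ∈ Finset.range n, Set.indicator B (fun _ => (1 : ℝ)) (X i ω)) / n)
    (α : ℝ) :
    ∀ᵐ ω ∂μ, ∀ Q : ProbabilityMeasure (Fin d → ℝ),
      (∃ (ns : ℕ → ℕ) (Qk : ℕ → ProbabilityMeasure (Fin d → ℝ)),
        StrictMono ns ∧ 1 ≤ ns 0 ∧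
        (∀ k, Qk k ∈ trimSet (Pn ω (ns k)) α) ∧
        Tendsto Qk atTop (nhds Q)) →
      Q ∈ trimSet P α := by
  let G : Finset (countableBasis (Fin d → ℝ)) → Set (Fin d → ℝ) := fun s => ⋃ b ∈ s, (b : Set _)
  have hG : ∀ s, IsOpen (G s) := fun s => isOpen_biUnion fun b _ => isOpen_of_mem_countableBasis b.2
  have := (countable_countableBasis (Fin d → ℝ)).to_subtype
  have hconv : ∀ᵐ ω ∂μ, ∀ s,
      Tendsto (fun n => (Pn ω n : Measure _) (G s)) atTop (𝓝 ((P : Measure _) (G s))) :=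
    ae_all_iff.2 fun s => ae_tendsto_measure_of_frequency hmeas (fun i j hij => hindep.indepFun hij)
      hdist (hG s).measurableSet Pn fun ω n hn => hPn ω n hn _ (hG s).measurableSet
  filter_upwards [hconv] with ω hω
  rintro Q ⟨ns, Qk, hns, -, hQk, hQ⟩
  have hc : ENNReal.ofReal α⁻¹ ≠ ⊤ := ENNReal.ofReal_ne_top
  have := Measure.OuterRegular.smul (P : Measure (Fin d → ℝ)) hc
  have hQP : (Q : Measure _) ≤ ENNReal.ofReal α⁻¹ • (P : Measure _) :=
    Measure.le_of_forall_biUnion_basis_le (isBasis_countableBasis _) (countable_countableBasis _)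
      fun s => ProbabilityMeasure.measure_le_of_tendsto_of_isOpen hQ (hG s)
        (Eventually.of_forall fun k => hQk k _ (hG s).measurableSet)
        (ENNReal.Tendsto.const_mul ((hω s).comp hns.tendsto_atTop) (Or.inr hc))
  exact fun B _ => hQP B

/-- Let `X₁, X₂, …` be i.i.d. random vectors in `ℝ^d` with common distribution `P`, let `Pₙ`
be the empirical measure of `X₁, …, Xₙ` and let `α ∈ (0,1]`. Then almost surely
`limsupₙ Pₙ^α ⊆ P^α`: every weak limit `Q` of a sequence `{Q_{n_k}}` with
`Q_{n_k} ∈ P_{n_k}^α` belongs to `P^α`. Here `X i` denotes `X_{i+1}` and the empirical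
measures are described by the hypothesis `hPn`. -/
theorem limsup_subset_trimSet {d : ℕ} {Ω : Type*} [MeasurableSpace Ω]
    (μ : Measure Ω) [IsProbabilityMeasure μ]
    (P : ProbabilityMeasure (Fin d → ℝ))
    (X : ℕ → Ω → (Fin d → ℝ))
    (hmeas : ∀ i, Measurable (X i))
    (hindep : iIndepFun X μ)
    (hdist : ∀ i, μ.map (X i) = (P : Measure (Fin d → ℝ)))
    (Pn : Ω → ℕ → ProbabilityMeasure (Fin d → ℝ))
    (hPn : ∀ ω : Ω, ∀ n : ℕ, 1 ≤ n → ∀ B : Set (Fin d → ℝ), MeasurableSet B →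
      ((Pn ω n : Measure (Fin d → ℝ)) B).toReal
        = (∑ i ∈ Finset.range n, Set.indicator B (fun _ => (1 : ℝ)) (X i ω)) / n)
    (α : ℝ) (hα : α ∈ Set.Ioc (0 : ℝ) 1) :
    ∀ᵐ ω ∂μ, ∀ Q : ProbabilityMeasure (Fin d → ℝ),
      (∃ (ns : ℕ → ℕ) (Qk : ℕ → ProbabilityMeasure (Fin d → ℝ)),
        StrictMono ns ∧ 1 ≤ ns 0 ∧
        (∀ k, Qk k ∈ trimSet (Pn ω (ns k)) α) ∧
        Tendsto Qk atTop (nhds Q)) →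
      Q ∈ trimSet P α :=
  limsup_subset_trimSet_general μ P X hmeas hindep hdist Pn hPn α
end

section
/- Let α ∈ (0, 1], let c = α^{-1}, and let {P_n}_n, {Q_n}_n and P, Q be Borel probability measures on ℝ^d such that P_n converges weakly to P, Q_n converges weakly to Q, and Q_n(B) ≤ c P_n(B) for every Borel set B ⊆ ℝ^d and every n. Then Q(B) ≤ c P(B) for every Borel set B ⊆ ℝ^d; in other words, if P_n → P weakly then limsup_n P_n^α ⊆ P^α. -/
open MeasureTheory Filter Topology

/- A closed set `F` is approximated from outside by its open thickenings `U_δ` and their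
closures: by the portmanteau theorem
`Q F ≤ Q U_δ ≤ liminf Qₙ U_δ ≤ c limsup Pₙ (cl U_δ) ≤ c P (cl U_δ)`,
and letting `δ → 0` gives `Q F ≤ c P F`. Inner regularity by closed sets, which holds for finite
measures on metrizable spaces, extends the inequality to all Borel sets. -/

open scoped ENNReal

theorem MeasureTheory.Measure.le_of_forall_isClosed_le {Ω : Type*} [TopologicalSpace Ω]
    [MeasurableSpace Ω] {μ ν : Measure Ω} [IsFiniteMeasure μ] [μ.WeaklyRegular]
    (h : ∀ F, IsClosed F → μ F ≤ ν F) : μ ≤ ν := by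
  refine Measure.le_iff.2 fun s hs => ?_
  rw [hs.measure_eq_iSup_isClosed_of_ne_top (measure_ne_top μ s)]
  exact iSup₂_le fun F hFs => iSup_le fun hF => (h F hF).trans (measure_mono hFs)

namespace MeasureTheory.ProbabilityMeasure

variable {Ω ι : Type*} [PseudoEMetricSpace Ω] [MeasurableSpace Ω] {L : Filter ι}
  {μs νs : ι → ProbabilityMeasure Ω} {μ ν : ProbabilityMeasure Ω} {c : ℝ≥0∞}

theorem measure_le_const_mul_cthickening_of_tendsto [OpensMeasurableSpace Ω] [L.NeBot]
    (hμ : Tendsto μs L (𝓝 μ)) (hν : Tendsto νs L (𝓝 ν)) (hc : c ≠ ∞)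
    (hle : ∀ i, (μs i : Measure Ω) ≤ c • (νs i : Measure Ω)) (F : Set Ω) {δ : ℝ}
    (hδ : 0 < δ) :
    (μ : Measure Ω) F ≤ c * (ν : Measure Ω) (Metric.cthickening δ F) :=
  calc (μ : Measure Ω) F
      ≤ (μ : Measure Ω) (Metric.thickening δ F) :=
        measure_mono (Metric.self_subset_thickening hδ F)
    _ ≤ L.liminf fun i => (μs i : Measure Ω) (Metric.thickening δ F) :=
        le_liminf_measure_open_of_tendsto hμ Metric.isOpen_thickening
    _ ≤ L.liminf fun i => c * (νs i : Measure Ω) (Metric.cthickening δ F) :=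
        liminf_le_liminf (.of_forall fun i => (hle i _).trans <|
          mul_le_mul_right (measure_mono (Metric.thickening_subset_cthickening δ F)) c)
    _ ≤ L.limsup fun i => c * (νs i : Measure Ω) (Metric.cthickening δ F) :=
        liminf_le_limsup
    _ = c * L.limsup fun i => (νs i : Measure Ω) (Metric.cthickening δ F) :=
        ENNReal.limsup_const_mul_of_ne_top hc
    _ ≤ c * (ν : Measure Ω) (Metric.cthickening δ F) :=
        mul_le_mul_right (limsup_measure_closed_le_of_tendsto hν Metric.isClosed_cthickening) c

theorem measure_le_const_mul_of_tendsto_of_isClosed [OpensMeasurableSpace Ω] [L.NeBot]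
    (hμ : Tendsto μs L (𝓝 μ)) (hν : Tendsto νs L (𝓝 ν)) (hc : c ≠ ∞)
    (hle : ∀ i, (μs i : Measure Ω) ≤ c • (νs i : Measure Ω)) {F : Set Ω} (hF : IsClosed F) :
    (μ : Measure Ω) F ≤ c * (ν : Measure Ω) F := by
  have hlim : Tendsto (fun δ => c * (ν : Measure Ω) (Metric.cthickening δ F)) (𝓝[>] 0)
      (𝓝 (c * (ν : Measure Ω) F)) :=
    (ENNReal.Tendsto.const_mul (tendsto_measure_cthickening_of_isClosed
      ⟨1, one_pos, measure_ne_top _ _⟩ hF) (.inr hc)).mono_left nhdsWithin_le_nhds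
  exact ge_of_tendsto hlim (eventually_nhdsWithin_of_forall fun δ hδ =>
    measure_le_const_mul_cthickening_of_tendsto hμ hν hc hle F hδ)

theorem le_const_smul_of_tendsto [BorelSpace Ω] [L.NeBot]
    (hμ : Tendsto μs L (𝓝 μ)) (hν : Tendsto νs L (𝓝 ν)) (hc : c ≠ ∞)
    (hle : ∀ i, (μs i : Measure Ω) ≤ c • (νs i : Measure Ω)) :
    (μ : Measure Ω) ≤ c • (ν : Measure Ω) :=
  Measure.le_of_forall_isClosed_le fun _ hF =>
    measure_le_const_mul_of_tendsto_of_isClosed hμ hν hc hle hF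

end MeasureTheory.ProbabilityMeasure

theorem trimSet_weak_limit_general {d : ℕ} (α : ℝ)
    (c : ℝ) (hc : c = α⁻¹)
    (Pseq Qseq : ℕ → ProbabilityMeasure (Fin d → ℝ))
    (P Q : ProbabilityMeasure (Fin d → ℝ))
    (hP : Tendsto Pseq atTop (nhds P))
    (hQ : Tendsto Qseq atTop (nhds Q))
    (hle : ∀ n, ∀ B : Set (Fin d → ℝ), MeasurableSet B →
      (Qseq n : Measure (Fin d → ℝ)) B ≤
        ENNReal.ofReal c * (Pseq n : Measure (Fin d → ℝ)) B) :
    (∀ B : Set (Fin d → ℝ), MeasurableSet B →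
      (Q : Measure (Fin d → ℝ)) B ≤ ENNReal.ofReal c * (P : Measure (Fin d → ℝ)) B)
    ∧ Q ∈ trimSet P α := by
  have hQP : (Q : Measure (Fin d → ℝ)) ≤ ENNReal.ofReal c • (P : Measure (Fin d → ℝ)) :=
    ProbabilityMeasure.le_const_smul_of_tendsto hQ hP ENNReal.ofReal_ne_top
      fun n => Measure.le_iff.2 (hle n)
  have hB : ∀ B : Set (Fin d → ℝ), MeasurableSet B →
      (Q : Measure (Fin d → ℝ)) B ≤ ENNReal.ofReal c * (P : Measure (Fin d → ℝ)) B :=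
    fun B _ => hQP B
  subst hc
  exact ⟨hB, hB⟩

/-- Let `α ∈ (0,1]` and `c = α⁻¹`. If `Pₙ → P` and `Qₙ → Q` weakly, with
`Qₙ(B) ≤ c Pₙ(B)` for every Borel set `B` and every `n`, then `Q(B) ≤ c P(B)` for every
Borel set `B`; in other words, `Q ∈ P^α`. -/
theorem trimSet_weak_limit {d : ℕ} (α : ℝ) (hα : α ∈ Set.Ioc (0 : ℝ) 1)
    (c : ℝ) (hc : c = α⁻¹)
    (Pseq Qseq : ℕ → ProbabilityMeasure (Fin d → ℝ))
    (P Q : ProbabilityMeasure (Fin d → ℝ))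
    (hP : Tendsto Pseq atTop (nhds P))
    (hQ : Tendsto Qseq atTop (nhds Q))
    (hle : ∀ n, ∀ B : Set (Fin d → ℝ), MeasurableSet B →
      (Qseq n : Measure (Fin d → ℝ)) B ≤
        ENNReal.ofReal c * (Pseq n : Measure (Fin d → ℝ)) B) :
    (∀ B : Set (Fin d → ℝ), MeasurableSet B →
      (Q : Measure (Fin d → ℝ)) B ≤ ENNReal.ofReal c * (P : Measure (Fin d → ℝ)) B)
    ∧ Q ∈ trimSet P α :=
  trimSet_weak_limit_general α c hc Pseq Qseq P Q hP hQ hle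
end

section
/- Let {X_i}_{i≥1} be a sequence of independent, identically distributed random vectors in ℝ^d with common distribution P, let P_n denote the empirical probability measure of X_1, …, X_n, and let α ∈ (0, 1]. Then almost surely the family ⋃_{n=1}^∞ P_n^α of all probability measures belonging to the α-trimming of some empirical measure P_n is tight. -/
/-!
Since `P` is inner regular, there are compact sets `K_m` with `P K_mᶜ → 0`. The strong law of
large numbers, applied to the indicators of the countably many sets `K_mᶜ`, shows that almost
surely `Pₙ K_mᶜ → P K_mᶜ` for every `m`, so `Pₙ K_mᶜ` is eventually small; adding the finitely
many sample points seen before that moment gives a compact `K` with `Pₙ Kᶜ` small for every `n`.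
A member of `Pₙ^α` puts mass at most `α⁻¹ Pₙ Kᶜ` on `Kᶜ`, a bound uniform in `n`.
-/

open MeasureTheory ProbabilityTheory Filter Topology

/-- A family of Borel probability measures on `ℝ^d` is tight if for every `ε > 0` there is a
compact set `K` with `P K > 1 - ε` for every member `P` of the family. -/
def TightFamily {d : ℕ} (Pi : Set (ProbabilityMeasure (Fin d → ℝ))) : Prop :=
  ∀ ε : ℝ, 0 < ε → ∃ K : Set (Fin d → ℝ), IsCompact K ∧
    ∀ P ∈ Pi, (1 : ℝ) - ε < ((P : Measure (Fin d → ℝ)) K).toReal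

section EmpiricalFreq

variable {E : Type*}

noncomputable def empiricalFreq (x : ℕ → E) (n : ℕ) (B : Set E) : ℝ :=
  (∑ i ∈ Finset.range n, B.indicator (fun _ => (1 : ℝ)) (x i)) / n

variable {x : ℕ → E} {n : ℕ}

lemma empiricalFreq_mono {B B' : Set E} (h : B ⊆ B') :
    empiricalFreq x n B ≤ empiricalFreq x n B' :=
  div_le_div_of_nonneg_right
    (Finset.sum_le_sum fun _ _ => Set.indicator_le_indicator_of_subset h (fun _ => zero_le_one) _)
    n.cast_nonneg

lemma empiricalFreq_eq_zero_of_forall_notMem {B : Set E} (h : ∀ i < n, x i ∉ B) :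
    empiricalFreq x n B = 0 := by
  rw [empiricalFreq, Finset.sum_eq_zero fun i hi =>
    Set.indicator_of_notMem (h i (Finset.mem_range.1 hi)) _, zero_div]

lemma exists_isCompact_forall_empiricalFreq_compl_lt [TopologicalSpace E] {δ : ℝ} (hδ : 0 < δ)
    (hx : ∃ K₀, IsCompact K₀ ∧ ∀ᶠ n in atTop, empiricalFreq x n K₀ᶜ < δ) :
    ∃ K, IsCompact K ∧ ∀ n, empiricalFreq x n Kᶜ < δ := by
  obtain ⟨K₀, hK₀, N, hN⟩ := hx.imp fun _ => And.imp_right eventually_atTop.1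
  refine ⟨K₀ ∪ x '' Set.Iio N, hK₀.union ((Set.finite_Iio N).image x).isCompact, fun n => ?_⟩
  rcases le_or_gt N n with hn | hn
  · exact (empiricalFreq_mono (Set.compl_subset_compl.2 Set.subset_union_left)).trans_lt (hN n hn)
  · rw [empiricalFreq_eq_zero_of_forall_notMem fun i hi =>
      not_not.2 (Or.inr ⟨i, hi.trans hn, rfl⟩)]
    exact hδ

end EmpiricalFreq

section StrongLaw

variable {Ω E : Type*} [MeasurableSpace Ω] [MeasurableSpace E] {μ : Measure Ω}
  {X : ℕ → Ω → E} {P : Measure E}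

theorem ae_tendsto_empiricalFreq [IsFiniteMeasure μ] (hmeas : ∀ i, Measurable (X i))
    (hindep : Pairwise fun i j => IndepFun (X i) (X j) μ) (hdist : ∀ i, μ.map (X i) = P)
    {B : Set E} (hB : MeasurableSet B) :
    ∀ᵐ ω ∂μ, Tendsto (fun n => empiricalFreq (X · ω) n B) atTop (𝓝 (P.real B)) := by
  set f : E → ℝ := B.indicator fun _ => 1
  have hf : Measurable f := measurable_const.indicator hB
  have hfX : f ∘ X 0 = (X 0 ⁻¹' B).indicator fun _ => 1 := rfl
  have hident : ∀ i, IdentDistrib (f ∘ X i) (f ∘ X 0) μ μ := fun i =>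
    (IdentDistrib.mk (hmeas i).aemeasurable (hmeas 0).aemeasurable
      (by rw [hdist i, hdist 0])).comp hf
  have hmean : μ[f ∘ X 0] = P.real B := by
    rw [hfX, integral_indicator_const _ (hmeas 0 hB), smul_eq_mul, mul_one, measureReal_def,
      measureReal_def, ← Measure.map_apply (hmeas 0) hB, hdist 0]
  have hint : Integrable (f ∘ X 0) μ := by
    rw [hfX]
    exact (integrable_const 1).indicator (hmeas 0 hB)
  rw [← hmean]
  exact strong_law_ae_real (fun i => f ∘ X i) hint (fun i j hij => (hindep hij).comp hf hf) hident

theorem ae_forall_exists_isCompact_eventually_empiricalFreq_compl_lt [TopologicalSpace E]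
    [BorelSpace E] [R1Space E] [IsFiniteMeasure μ] [P.InnerRegularCompactLTTop]
    (hmeas : ∀ i, Measurable (X i)) (hindep : Pairwise fun i j => IndepFun (X i) (X j) μ)
    (hdist : ∀ i, μ.map (X i) = P) :
    ∀ᵐ ω ∂μ, ∀ δ > 0, ∃ K, IsCompact K ∧ ∀ᶠ n in atTop, empiricalFreq (X · ω) n Kᶜ < δ := by
  have : IsFiniteMeasure P := hdist 0 ▸ inferInstance
  have hK : ∀ m : ℕ, ∃ K, IsCompact K ∧ IsClosed K ∧ P Kᶜ < ENNReal.ofReal (1 / (m + 1)) :=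
    fun m => by
      obtain ⟨K, -, hK, hKc, hPK⟩ := MeasurableSet.univ.exists_isCompact_isClosed_sdiff_lt
        (measure_ne_top P _) (by positivity : ENNReal.ofReal (1 / (m + 1)) ≠ 0)
      exact ⟨K, hK, hKc, by rwa [Set.compl_eq_univ_sdiff]⟩
  choose K hK hKc hPK using hK
  filter_upwards [ae_all_iff.2 fun m =>
    ae_tendsto_empiricalFreq hmeas hindep hdist (hKc m).measurableSet.compl] with ω hω δ hδ
  obtain ⟨m, hm⟩ := exists_nat_one_div_lt hδ
  exact ⟨K m, hK m,
    (hω m).eventually (gt_mem_nhds ((ENNReal.toReal_lt_of_lt_ofReal (hPK m)).trans hm))⟩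

end StrongLaw

lemma measureReal_le_of_mem_trimSet {d : ℕ} {P Q : ProbabilityMeasure (Fin d → ℝ)} {α : ℝ}
    (hQ : Q ∈ trimSet P α) {B : Set (Fin d → ℝ)} (hB : MeasurableSet B) :
    (Q : Measure (Fin d → ℝ)).real B
      ≤ (ENNReal.ofReal α⁻¹).toReal * (P : Measure (Fin d → ℝ)).real B := by
  rw [measureReal_def, measureReal_def, ← ENNReal.toReal_mul]
  exact ENNReal.toReal_mono (by finiteness) (hQ B hB)

lemma TightFamily.of_forall_measureReal_compl_lt {d : ℕ}
    {F : Set (ProbabilityMeasure (Fin d → ℝ))}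
    (h : ∀ ε > 0, ∃ K, IsCompact K ∧ ∀ Q ∈ F, (Q : Measure (Fin d → ℝ)).real Kᶜ < ε) :
    TightFamily F := fun ε hε => by
  obtain ⟨K, hK, hQ⟩ := h ε hε
  refine ⟨K, hK, fun Q hQF => ?_⟩
  have := hQ Q hQF
  rw [probReal_compl_eq_one_sub hK.isClosed.measurableSet] at this
  rw [← measureReal_def]
  linarith

theorem tight_union_trimmed_empirical_general {d : ℕ} {Ω : Type*} [MeasurableSpace Ω]
    (μ : Measure Ω) [IsProbabilityMeasure μ]
    (P : ProbabilityMeasure (Fin d → ℝ))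
    (X : ℕ → Ω → (Fin d → ℝ))
    (hmeas : ∀ i, Measurable (X i))
    (hindep : iIndepFun X μ)
    (hdist : ∀ i, μ.map (X i) = (P : Measure (Fin d → ℝ)))
    (Pn : Ω → ℕ → ProbabilityMeasure (Fin d → ℝ))
    (hPn : ∀ ω : Ω, ∀ n : ℕ, 1 ≤ n → ∀ B : Set (Fin d → ℝ), MeasurableSet B →
      ((Pn ω n : Measure (Fin d → ℝ)) B).toReal
        = (∑ i ∈ Finset.range n, Set.indicator B (fun _ => (1 : ℝ)) (X i ω)) / n)
    (α : ℝ) :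
    ∀ᵐ ω ∂μ, TightFamily {Q | ∃ n : ℕ, 1 ≤ n ∧ Q ∈ trimSet (Pn ω n) α} := by
  filter_upwards [ae_forall_exists_isCompact_eventually_empiricalFreq_compl_lt hmeas
    (fun i j hij => hindep.indepFun hij) hdist] with ω hω
  refine TightFamily.of_forall_measureReal_compl_lt fun ε hε => ?_
  set c := (ENNReal.ofReal α⁻¹).toReal
  have hc : 0 ≤ c := ENNReal.toReal_nonneg
  obtain ⟨K, hK, hfreq⟩ := exists_isCompact_forall_empiricalFreq_compl_lt
    (by positivity : 0 < ε / (c + 1)) (hω _ (by positivity))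
  refine ⟨K, hK, ?_⟩
  rintro Q ⟨n, hn, hQ⟩
  have hKc : MeasurableSet Kᶜ := hK.isClosed.measurableSet.compl
  calc (Q : Measure (Fin d → ℝ)).real Kᶜ
      ≤ c * (Pn ω n : Measure (Fin d → ℝ)).real Kᶜ := measureReal_le_of_mem_trimSet hQ hKc
    _ = c * empiricalFreq (X · ω) n Kᶜ := by rw [measureReal_def, hPn ω n hn _ hKc, empiricalFreq]
    _ ≤ c * (ε / (c + 1)) := by gcongr; exact (hfreq n).le
    _ < ε := by rw [mul_div_assoc', div_lt_iff₀ (by positivity)]; nlinarith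

/-- Let `X₁, X₂, …` be i.i.d. random vectors in `ℝ^d` with common distribution `P`, let `Pₙ`
be the empirical measure of `X₁, …, Xₙ` and let `α ∈ (0,1]`. Then almost surely the family
`⋃ₙ Pₙ^α` of all probability measures belonging to the `α`-trimming of some empirical measure
is tight. Here `X i` denotes `X_{i+1}` and the empirical measures are described by the
hypothesis `hPn`. -/
theorem tight_union_trimmed_empirical {d : ℕ} {Ω : Type*} [MeasurableSpace Ω]
    (μ : Measure Ω) [IsProbabilityMeasure μ]
    (P : ProbabilityMeasure (Fin d → ℝ))
    (X : ℕ → Ω → (Fin d → ℝ))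
    (hmeas : ∀ i, Measurable (X i))
    (hindep : iIndepFun X μ)
    (hdist : ∀ i, μ.map (X i) = (P : Measure (Fin d → ℝ)))
    (Pn : Ω → ℕ → ProbabilityMeasure (Fin d → ℝ))
    (hPn : ∀ ω : Ω, ∀ n : ℕ, 1 ≤ n → ∀ B : Set (Fin d → ℝ), MeasurableSet B →
      ((Pn ω n : Measure (Fin d → ℝ)) B).toReal
        = (∑ i ∈ Finset.range n, Set.indicator B (fun _ => (1 : ℝ)) (X i ω)) / n)
    (α : ℝ) (hα : α ∈ Set.Ioc (0 : ℝ) 1) :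
    ∀ᵐ ω ∂μ, TightFamily {Q | ∃ n : ℕ, 1 ≤ n ∧ Q ∈ trimSet (Pn ω n) α} :=
  tight_union_trimmed_empirical_general μ P X hmeas hindep hdist Pn hPn α
end

section
/- Let P be a Borel probability measure on ℝ^d with finite first moment and let α ∈ (0, 1]. Then the zonoid α-trimmed region of P equals the set of barycentres of the measures in the α-trimming of P: ZD^α(P) = { ∫_{ℝ^d} x dQ(x) : Q ∈ P^α }. -/
/-!
A probability measure `Q` lies in the `α`-trimming of `P` exactly when `Q ≤ α⁻¹ • P`, that is,
when `Q` has a density `dQ/dP` with values in `[0, α⁻¹]` (after modification on a `P`-null set).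
The barycentre of such a `Q` is `∫ x (dQ/dP)(x) dP(x)`, and conversely every admissible weight `g`
of the zonoid region is the density of the measure `P.withDensity g` in the trimming.
-/

open MeasureTheory Filter Topology

/-- The zonoid `α`-trimmed region of `P`: the set of all vectors `∫ x g(x) dP(x)` where
`g : ℝ^d → [0, α⁻¹]` is measurable with `∫ g dP = 1`. -/
def zonoidRegion {d : ℕ} (P : ProbabilityMeasure (Fin d → ℝ)) (α : ℝ) :
    Set (Fin d → ℝ) :=
  {y | ∃ g : (Fin d → ℝ) → ℝ, Measurable g ∧ (∀ x, g x ∈ Set.Icc (0 : ℝ) α⁻¹) ∧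
    (∫ x, g x ∂(P : Measure (Fin d → ℝ))) = 1 ∧
    y = ∫ x, g x • x ∂(P : Measure (Fin d → ℝ))}

open scoped ENNReal

namespace MeasureTheory

variable {Ω E : Type*} [MeasurableSpace Ω] [NormedAddCommGroup E] [NormedSpace ℝ E]
  {μ ν : Measure Ω}

theorem Measure.rnDeriv_le_of_le_smul [SigmaFinite ν] {c : ℝ≥0∞}
    (h : μ ≤ c • ν) : μ.rnDeriv ν ≤ᵐ[ν] fun _ ↦ c :=
  ae_le_of_forall_setLIntegral_le_of_sigmaFinite (μ.measurable_rnDeriv ν) fun s _ _ ↦ by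
    rw [setLIntegral_const, ← smul_eq_mul, ← Measure.smul_apply]
    exact (Measure.setLIntegral_rnDeriv_le s).trans (h s)

theorem Measure.withDensity_ofReal_le_smul {g : Ω → ℝ} {c : ℝ}
    (hgc : ∀ x, g x ≤ c) :
    μ.withDensity (fun x ↦ ENNReal.ofReal (g x)) ≤ ENNReal.ofReal c • μ := by
  rw [← withDensity_const]
  exact withDensity_mono (.of_forall fun x ↦ ENNReal.ofReal_le_ofReal (hgc x))

theorem isProbabilityMeasure_withDensity_ofReal {g : Ω → ℝ}
    (hg_int : Integrable g μ) (hg_nonneg : 0 ≤ᵐ[μ] g) (hg_one : ∫ x, g x ∂μ = 1) :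
    IsProbabilityMeasure (μ.withDensity fun x ↦ ENNReal.ofReal (g x)) := by
  constructor
  rw [withDensity_apply _ .univ, Measure.restrict_univ,
    ← ofReal_integral_eq_lintegral_ofReal hg_int hg_nonneg, hg_one, ENNReal.ofReal_one]

theorem integral_withDensity_ofReal_smul {g : Ω → ℝ} (hg : Measurable g)
    (hg_nonneg : ∀ x, 0 ≤ g x) (f : Ω → E) :
    ∫ x, f x ∂(μ.withDensity fun x ↦ ENNReal.ofReal (g x)) = ∫ x, g x • f x ∂μ := by
  rw [integral_withDensity_eq_integral_toReal_smul hg.ennreal_ofReal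
    (.of_forall fun _ ↦ ENNReal.ofReal_lt_top)]
  simp only [ENNReal.toReal_ofReal (hg_nonneg _)]

/-- The density is the Radon–Nikodym derivative `dμ/dν`, truncated at `c`: this changes it only
on a `ν`-null set and makes the bound hold everywhere. -/
theorem Measure.exists_density_mem_Icc_of_le_smul [IsProbabilityMeasure μ]
    [SigmaFinite ν] {c : ℝ} (h : μ ≤ ENNReal.ofReal c • ν) :
    ∃ g : Ω → ℝ, Measurable g ∧ (∀ x, g x ∈ Set.Icc 0 c) ∧ ∫ x, g x ∂ν = 1 ∧
      ∀ f : Ω → E, ∫ x, g x • f x ∂ν = ∫ x, f x ∂μ := by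
  have hc : 0 < c := by
    by_contra! hc
    have h_univ := h Set.univ
    simp [ENNReal.ofReal_of_nonpos hc] at h_univ
  have hμν := absolutelyContinuous_of_le_smul h
  have h_ae : (fun x ↦ min (μ.rnDeriv ν x).toReal c) =ᵐ[ν] fun x ↦ (μ.rnDeriv ν x).toReal := by
    filter_upwards [rnDeriv_le_of_le_smul h] with x hx
    exact min_eq_left (ENNReal.toReal_le_of_le_ofReal hc.le hx)
  refine ⟨fun x ↦ min (μ.rnDeriv ν x).toReal c,
    (measurable_rnDeriv μ ν).ennreal_toReal.min measurable_const,
    fun x ↦ ⟨le_min ENNReal.toReal_nonneg hc.le, min_le_right _ _⟩, ?_, fun f ↦ ?_⟩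
  · rw [integral_congr_ae h_ae, integral_toReal_rnDeriv hμν, probReal_univ]
  · rw [← integral_rnDeriv_smul hμν]
    refine integral_congr_ae ?_
    filter_upwards [h_ae] with x hx
    exact congrArg (· • f x) hx

end MeasureTheory

theorem zonoidRegion_eq_barycentres_trimSet_general {d : ℕ}
    (P : ProbabilityMeasure (Fin d → ℝ))
    (α : ℝ) :
    zonoidRegion P α
      = {y | ∃ Q ∈ trimSet P α, y = ∫ x, x ∂(Q : Measure (Fin d → ℝ))} := by
  ext y
  constructor
  · rintro ⟨g, hg, hg_mem, hg_one, rfl⟩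
    have hg_int : Integrable g (P : Measure (Fin d → ℝ)) :=
      Integrable.of_bound hg.aestronglyMeasurable α⁻¹ (.of_forall fun x ↦ by
        rw [Real.norm_eq_abs, abs_of_nonneg (hg_mem x).1]; exact (hg_mem x).2)
    have := isProbabilityMeasure_withDensity_ofReal hg_int (.of_forall fun x ↦ (hg_mem x).1)
      hg_one
    exact ⟨⟨_, this⟩, fun B _ ↦ Measure.withDensity_ofReal_le_smul (fun x ↦ (hg_mem x).2) B,
      (integral_withDensity_ofReal_smul hg (fun x ↦ (hg_mem x).1) id).symm⟩
  · rintro ⟨Q, hQ, rfl⟩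
    obtain ⟨g, hg, hg_mem, hg_one, hg_smul⟩ := Measure.exists_density_mem_Icc_of_le_smul
      (E := Fin d → ℝ) (Measure.le_iff.2 fun B hB ↦ by simpa using hQ B hB)
    exact ⟨g, hg, hg_mem, hg_one, (hg_smul id).symm⟩

/-- For a Borel probability measure `P` on `ℝ^d` with finite first moment and `α ∈ (0,1]`,
the zonoid `α`-trimmed region of `P` is the set of barycentres of the measures in the
`α`-trimming of `P`. -/
theorem zonoidRegion_eq_barycentres_trimSet {d : ℕ}
    (P : ProbabilityMeasure (Fin d → ℝ))
    (hmoment : Integrable (fun x : Fin d → ℝ => x) (P : Measure (Fin d → ℝ)))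
    (α : ℝ) (hα : α ∈ Set.Ioc (0 : ℝ) 1) :
    zonoidRegion P α
      = {y | ∃ Q ∈ trimSet P α, y = ∫ x, x ∂(Q : Measure (Fin d → ℝ))} :=
  zonoidRegion_eq_barycentres_trimSet_general P α
end
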